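/- Let p be prime, q a prime power with p ∣ q−1, and ω ∈ 𝔽_q of order p. If f : ℤ/p → 𝔽_q is nonzero with |supp f| = m, and Z' ⊆ ℤ/p is any arithmetic progression of length m, then f̂ does not vanish identically on Z'; i.e., there exists t ∈ Z' with f̂(t) ≠ 0. -/

import Mathlib

/-- The finite-field Fourier transform f̂(t) = p⁻¹ ∑_z ω^{tz} f(z). -/
def dft {p : ℕ} [NeZero p] {F : Type} [Field F] (ω : F) (f : ZMod p → F) :
    ZMod p → F :=
  fun t => (p : F)⁻¹ * ∑ z : ZMod p, ω ^ (t * z).val * f z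

/-!
If f̂ vanished at the m points a + jb (j < m), then, writing ψ(x) = ω^x, the m relations
∑_{z ∈ supp f} (ψ(az) f(z)) · ψ(bz)^j = 0 form a Vandermonde system in the m distinct nodes ψ(bz),
z ∈ supp f (distinct because ψ is injective and b ≠ 0), forcing f = 0 on its own support.
The factor p⁻¹ is harmless: a primitive p-th root of unity exists only when p ≠ 0 in F.
-/

open Finset Function

theorem Finset.eq_zero_of_forall_sum_mul_pow_eq_zero {R ι : Type*} [CommRing R] [IsDomain R]
    {s : Finset ι} {x c : ι → R} (hx : Set.InjOn x s)
    (h : ∀ j < #s, ∑ i ∈ s, c i * x i ^ j = 0) : ∀ i ∈ s, c i = 0 := by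
  set e := s.equivFin
  have hinj : Injective fun k => x (e.symm k) := fun k l hkl =>
    e.symm.injective (Subtype.ext (hx (e.symm k).2 (e.symm l).2 hkl))
  have hzero := Matrix.eq_zero_of_forall_pow_sum_mul_pow_eq_zero hinj fun j => by
    rw [← h j j.2, ← s.sum_coe_sort, ← e.symm.sum_comp]
  intro i hi
  simpa using congrFun hzero (e ⟨i, hi⟩)

theorem AddChar.zmodChar_injective {C : Type*} [CommMonoid C] {n : ℕ} [NeZero n] {ζ : C}
    (hζ : IsPrimitiveRoot ζ n) : Injective (zmodChar n hζ.pow_eq_one) := fun x y hxy =>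
  ZMod.val_injective n (hζ.pow_inj (ZMod.val_lt x) (ZMod.val_lt y) hxy)

variable {p : ℕ} [Fact p.Prime] {F : Type} [Field F] {ω : F}

theorem eq_zero_of_dft_eq_zero_on_progression (hω : IsPrimitiveRoot ω p) {f : ZMod p → F}
    {a b : ZMod p} (hb : b ≠ 0)
    (h : ∀ j < (support f).ncard, dft ω f (a + (j : ZMod p) * b) = 0) : f = 0 := by
  classical
  set ψ := AddChar.zmodChar p hω.pow_eq_one
  have hp : (p : F) ≠ 0 := hω.neZero'.out
  set s := univ.filter (f · ≠ 0)
  have hs : (support f).ncard = #s := by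
    rw [Set.ncard_eq_toFinset_card']; congr; ext; simp [s]
  have hnodes : Set.InjOn (fun z => ψ (b * z)) s := fun z _ z' _ hzz' =>
    mul_left_cancel₀ hb (AddChar.zmodChar_injective hω hzz')
  have hpowsum : ∀ j < #s, ∑ z ∈ s, ψ (a * z) * f z * ψ (b * z) ^ j = 0 := fun j hj => by
    have hdft := h j (hs ▸ hj)
    rw [dft, mul_eq_zero, or_iff_right (inv_ne_zero hp)] at hdft
    rw [← hdft, ← sum_filter_of_ne (s := univ) (p := (f · ≠ 0))
      fun z _ hz => right_ne_zero_of_mul hz]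
    refine sum_congr rfl fun z _ => ?_
    have hexp : (a + j * b) * z = a * z + j • (b * z) := by rw [nsmul_eq_mul]; ring
    rw [← AddChar.zmodChar_apply hω.pow_eq_one, hexp, ψ.map_add_eq_mul, ψ.map_nsmul_eq_pow]
    ring
  have hcoeff :=
    s.eq_zero_of_forall_sum_mul_pow_eq_zero (c := fun z => ψ (a * z) * f z) hnodes hpowsum
  funext z
  by_contra hz
  exact mul_ne_zero ((ψ.val_isUnit _).ne_zero) hz (hcoeff z (by simpa [s] using hz))

theorem stmt10_general (p : ℕ) [Fact p.Prime]
    {F : Type} [Field F]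
    (ω : F) (hω : orderOf ω = p)
    (f : ZMod p → F) (hf : f ≠ 0) (m : ℕ) (hm : (Function.support f).ncard = m)
    (Z' : Finset (ZMod p)) (a b : ZMod p) (hb : b ≠ 0)
    (hZ' : Z' = (Finset.range m).image fun j : ℕ => a + (j : ZMod p) * b) :
    ∃ t ∈ Z', dft ω f t ≠ 0 := by
  by_contra! hvanish
  refine hf (eq_zero_of_dft_eq_zero_on_progression (a := a)
    (IsPrimitiveRoot.iff_orderOf.mpr hω) hb fun j hj => hvanish _ ?_)
  rw [hZ']
  exact mem_image_of_mem _ (mem_range.mpr (hm ▸ hj))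

/-- If f : ℤ/p → 𝔽_q is nonzero with |supp f| = m, and Z' ⊆ ℤ/p is any
arithmetic progression of length m, then f̂ does not vanish identically on Z'. -/
theorem stmt10 (p q : ℕ) [Fact p.Prime] (hq : IsPrimePow q) (hpq : p ∣ q - 1)
    {F : Type} [Field F] [Fintype F] (hF : Fintype.card F = q)
    (ω : F) (hω : orderOf ω = p)
    (f : ZMod p → F) (hf : f ≠ 0) (m : ℕ) (hm : (Function.support f).ncard = m)
    (Z' : Finset (ZMod p)) (a b : ZMod p) (hb : b ≠ 0)
    (hZ' : Z' = (Finset.range m).image fun j : ℕ => a + (j : ZMod p) * b)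
    (hcard : Z'.card = m) :
    ∃ t ∈ Z', dft ω f t ≠ 0 :=
  stmt10_general p ω hω f hf m hm Z' a b hb hZ'
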